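/- arXiv:2110.14134 — 2 statements merged into one kernel-verified Lean document; each statement's English description precedes it below -/
import Mathlib

section
/- Let A = a₀·I + a·σ and B = b₀·I + b·σ be qubit observables with (a₀,a),(b₀,b) ∈ ℝ×ℝ³ and with {a,b} linearly independent in ℝ³. Then the uncertainty region {(Δ_ρA, Δ_ρB) : ρ a qubit density matrix} ⊆ ℝ²_{≥0} equals the set of pairs (x,y) with x ∈ [0,|a|], y ∈ [0,|b|] satisfying |b|²x² + |a|²y² + 2|⟨a,b⟩|·√((|a|²−x²)(|b|²−y²)) ≥ |a|²|b|² + ⟨a,b⟩², where |·| is the Euclidean norm and ⟨a,b⟩ the Euclidean inner product on ℝ³. -/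
open Matrix MeasureTheory Filter Set
open scoped RealInnerProductSpace Kronecker ComplexOrder

noncomputable section

/-- ℝ³ with the Euclidean norm and inner product. -/
abbrev E3 : Type := EuclideanSpace ℝ (Fin 3)

/-- The Pauli matrices. -/
def pauli1 : Matrix (Fin 2) (Fin 2) ℂ := !![0, 1; 1, 0]
def pauli2 : Matrix (Fin 2) (Fin 2) ℂ := !![0, -Complex.I; Complex.I, 0]
def pauli3 : Matrix (Fin 2) (Fin 2) ℂ := !![1, 0; 0, -1]

/-- The qubit observable `a₀·I + a·σ`. -/
def qObs (a0 : ℝ) (a : E3) : Matrix (Fin 2) (Fin 2) ℂ :=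
  (a0 : ℂ) • (1 : Matrix (Fin 2) (Fin 2) ℂ)
    + (a 0 : ℂ) • pauli1 + (a 1 : ℂ) • pauli2 + (a 2 : ℂ) • pauli3

/-- A density matrix: positive semidefinite with trace one. -/
def IsDensityMatrix {n : Type*} [Fintype n] (ρ : Matrix n n ℂ) : Prop :=
  ρ.PosSemidef ∧ ρ.trace = 1

/-- Mean value `⟨M⟩_ρ = Tr(Mρ)` of an observable `M` in the state `ρ`. -/
def mean {n : Type*} [Fintype n] (M ρ : Matrix n n ℂ) : ℝ :=
  (Matrix.trace (M * ρ)).re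

/-- Variance `(Δ_ρ M)² = Tr(M²ρ) − (Tr(Mρ))²`. -/
def variance {n : Type*} [Fintype n] (M ρ : Matrix n n ℂ) : ℝ :=
  (Matrix.trace (M * M * ρ)).re - (mean M ρ) ^ 2

/-- Uncertainty `Δ_ρ M` (standard deviation). -/
def uncertainty {n : Type*} [Fintype n] (M ρ : Matrix n n ℂ) : ℝ :=
  Real.sqrt (variance M ρ)

/-- Gram matrix of a tuple of vectors in ℝ³. -/
def gram {m : ℕ} (v : Fin m → E3) : Matrix (Fin m) (Fin m) ℝ :=
  Matrix.of fun i j => (inner ℝ (v i) (v j) : ℝ)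

lemma gram_isHermitian {m : ℕ} (v : Fin m → E3) : (gram v).IsHermitian := by
  ext i j
  simp [_root_.gram, Matrix.conjTranspose_apply, mul_comm, real_inner_comm]

/-- Smallest eigenvalue of the Gram matrix. -/
def lamMin {m : ℕ} (v : Fin m → E3) : ℝ := ⨅ i, (gram_isHermitian v).eigenvalues i

/-- Largest eigenvalue of the Gram matrix. -/
def lamMax {m : ℕ} (v : Fin m → E3) : ℝ := ⨆ i, (gram_isHermitian v).eigenvalues i

/-!
Every qubit state is `(I + r·σ) / 2` with `‖r‖ ≤ 1`, and in it `a₀ I + a·σ` has mean `a₀ + ⟪a, r⟫`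
and variance `‖a‖² - ⟪a, r⟫²`. The uncertainty region is therefore the image of the set of pairs
`(⟪a, r⟫, ⟪b, r⟫)`, `‖r‖ ≤ 1`, under `(s, t) ↦ (√(‖a‖² - s²), √(‖b‖² - t²))`. For independent
`a, b` that set is the filled ellipse `‖b‖² s² - 2⟪a, b⟫ s t + ‖a‖² t² ≤ ‖a‖² ‖b‖² - ⟪a, b⟫²`
(Cauchy–Schwarz one way, an explicit preimage in `span {a, b}` the other), and choosing the signs
of `s, t` to make the cross term as negative as possible yields the stated inequality.
-/

section InnerProductSpace

variable {V : Type*} [NormedAddCommGroup V] [InnerProductSpace ℝ V] (a b : V)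

def gramDet : ℝ := ‖a‖ ^ 2 * ‖b‖ ^ 2 - ⟪a, b⟫ ^ 2

def ellipseForm (s t : ℝ) : ℝ := ‖b‖ ^ 2 * s ^ 2 - 2 * ⟪a, b⟫ * s * t + ‖a‖ ^ 2 * t ^ 2

lemma ellipseForm_eq_norm_sq (s t : ℝ) : ellipseForm a b s t = ‖t • a - s • b‖ ^ 2 := by
  rw [ellipseForm, norm_sub_sq_real, norm_smul, norm_smul, real_inner_smul_left,
    real_inner_smul_right, Real.norm_eq_abs, Real.norm_eq_abs, mul_pow, mul_pow, sq_abs, sq_abs]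
  ring

lemma gramDet_nonneg : 0 ≤ gramDet a b := by
  have := real_inner_mul_inner_self_le a b
  rw [real_inner_self_eq_norm_sq, real_inner_self_eq_norm_sq] at this
  rw [gramDet]; nlinarith

lemma gramDet_pos_of_linearIndependent (hab : LinearIndependent ℝ ![a, b]) :
    0 < gramDet a b := by
  have hb : b ≠ 0 := hab.ne_zero 1
  have hv : ‖b‖ ^ 2 • a - ⟪a, b⟫ • b ≠ 0 := fun h => by
    rw [sub_eq_add_neg, ← neg_smul] at h
    exact pow_ne_zero 2 (norm_ne_zero_iff.mpr hb) (LinearIndependent.pair_iff.mp hab _ _ h).1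
  have hnorm : ‖b‖ ^ 2 * gramDet a b = ‖‖b‖ ^ 2 • a - ⟪a, b⟫ • b‖ ^ 2 := by
    rw [← ellipseForm_eq_norm_sq, ellipseForm, gramDet]; ring
  have hpos : 0 < ‖b‖ ^ 2 * gramDet a b := by rw [hnorm]; positivity
  exact pos_of_mul_pos_right hpos (sq_nonneg _)

/-- `λ • a + μ • b` with `(λ, μ) = adj(G) (s, t)` for the Gram matrix `G` of `a, b`, so that its
inner products with `a` and `b` are `det G • (s, t)`. -/
def adjugateCombination (s t : ℝ) : V :=
  (‖b‖ ^ 2 * s - ⟪a, b⟫ * t) • a + (‖a‖ ^ 2 * t - ⟪a, b⟫ * s) • b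

variable {a b}

lemma inner_left_adjugateCombination (s t : ℝ) :
    ⟪a, adjugateCombination a b s t⟫ = gramDet a b * s := by
  simp only [adjugateCombination, gramDet, inner_add_right, real_inner_smul_right,
    real_inner_self_eq_norm_sq]
  ring

lemma inner_right_adjugateCombination (s t : ℝ) :
    ⟪b, adjugateCombination a b s t⟫ = gramDet a b * t := by
  simp only [adjugateCombination, gramDet, inner_add_right, real_inner_smul_right,
    real_inner_self_eq_norm_sq, real_inner_comm a b]
  ring

lemma norm_sq_adjugateCombination (s t : ℝ) :
    ‖adjugateCombination a b s t‖ ^ 2 = gramDet a b * ellipseForm a b s t := by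
  rw [← real_inner_self_eq_norm_sq]
  nth_rewrite 1 [adjugateCombination]
  rw [inner_add_left, real_inner_smul_left, real_inner_smul_left,
    inner_left_adjugateCombination, inner_right_adjugateCombination, ellipseForm]
  ring

lemma inner_sq_le_norm_sq_of_norm_le_one (a : V) {r : V} (hr : ‖r‖ ≤ 1) :
    ⟪a, r⟫ ^ 2 ≤ ‖a‖ ^ 2 :=
  sq_le_sq.mpr <| by
    rw [abs_norm]
    exact (abs_real_inner_le_norm a r).trans (mul_le_of_le_one_right (norm_nonneg a) hr)

lemma ellipseForm_inner_le (r : V) :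
    ellipseForm a b ⟪a, r⟫ ⟪b, r⟫ ≤ gramDet a b * ‖r‖ ^ 2 := by
  have hQ : 0 ≤ ellipseForm a b ⟪a, r⟫ ⟪b, r⟫ := by rw [ellipseForm_eq_norm_sq]; positivity
  -- Cauchy–Schwarz for `r` and `adjugateCombination`: `Q² ≤ det G · Q · ‖r‖²`, `Q` the ellipse form
  have hinner : ⟪adjugateCombination a b ⟪a, r⟫ ⟪b, r⟫, r⟫ = ellipseForm a b ⟪a, r⟫ ⟪b, r⟫ := by
    simp only [adjugateCombination, ellipseForm, inner_add_left, real_inner_smul_left]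
    ring
  have hcs := real_inner_mul_inner_self_le (adjugateCombination a b ⟪a, r⟫ ⟪b, r⟫) r
  rw [hinner, real_inner_self_eq_norm_sq, real_inner_self_eq_norm_sq,
    norm_sq_adjugateCombination] at hcs
  rcases hQ.eq_or_lt with h | h
  · rw [← h]; exact mul_nonneg (gramDet_nonneg a b) (sq_nonneg _)
  · nlinarith

lemma exists_inner_eq_of_ellipseForm_le (hD : 0 < gramDet a b) {s t : ℝ}
    (hst : ellipseForm a b s t ≤ gramDet a b) :
    ∃ r : V, ‖r‖ ≤ 1 ∧ ⟪a, r⟫ = s ∧ ⟪b, r⟫ = t := by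
  refine ⟨(gramDet a b)⁻¹ • adjugateCombination a b s t, ?_, ?_, ?_⟩
  · rw [← sq_le_one_iff₀ (norm_nonneg _), norm_smul, mul_pow, norm_sq_adjugateCombination,
      Real.norm_eq_abs, sq_abs, inv_pow, sq, mul_inv, mul_assoc, inv_mul_cancel_left₀ hD.ne']
    exact (inv_mul_le_one₀ hD).mpr hst
  · rw [real_inner_smul_right, inner_left_adjugateCombination, inv_mul_cancel_left₀ hD.ne']
  · rw [real_inner_smul_right, inner_right_adjugateCombination, inv_mul_cancel_left₀ hD.ne']

lemma sqrt_sub_sq_mem_Icc {c : ℝ} (hc : 0 ≤ c) (s : ℝ) :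
    √(c ^ 2 - s ^ 2) ∈ Icc 0 c :=
  ⟨Real.sqrt_nonneg _, Real.sqrt_le_iff.mpr ⟨hc, by nlinarith [sq_nonneg s]⟩⟩

lemma mem_region_iff_exists_ellipseForm_le {x y : ℝ} :
    (x ∈ Icc 0 ‖a‖ ∧ y ∈ Icc 0 ‖b‖ ∧
      ‖b‖ ^ 2 * x ^ 2 + ‖a‖ ^ 2 * y ^ 2 + 2 * |⟪a, b⟫| * √((‖a‖ ^ 2 - x ^ 2) * (‖b‖ ^ 2 - y ^ 2))
        ≥ ‖a‖ ^ 2 * ‖b‖ ^ 2 + ⟪a, b⟫ ^ 2) ↔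
    ∃ s t : ℝ, s ^ 2 ≤ ‖a‖ ^ 2 ∧ t ^ 2 ≤ ‖b‖ ^ 2 ∧ ellipseForm a b s t ≤ gramDet a b ∧
      x = √(‖a‖ ^ 2 - s ^ 2) ∧ y = √(‖b‖ ^ 2 - t ^ 2) := by
  constructor
  · rintro ⟨⟨hx0, hxa⟩, ⟨hy0, hyb⟩, hineq⟩
    have hx2 : x ^ 2 ≤ ‖a‖ ^ 2 := pow_le_pow_left₀ hx0 hxa 2
    have hy2 : y ^ 2 ≤ ‖b‖ ^ 2 := pow_le_pow_left₀ hy0 hyb 2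
    -- the sign of `t` is chosen so that the cross term of the ellipse form is `-2|⟪a, b⟫| |s t|`
    obtain ⟨ε, hε, hεg⟩ : ∃ ε : ℝ, ε ^ 2 = 1 ∧ ε * ⟪a, b⟫ = |⟪a, b⟫| := by
      rcases le_total 0 ⟪a, b⟫ with h | h
      · exact ⟨1, by norm_num, by rw [one_mul, abs_of_nonneg h]⟩
      · exact ⟨-1, by norm_num, by rw [neg_one_mul, abs_of_nonpos h]⟩
    have hs : √(‖a‖ ^ 2 - x ^ 2) ^ 2 = ‖a‖ ^ 2 - x ^ 2 := Real.sq_sqrt (by linarith)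
    have ht : (ε * √(‖b‖ ^ 2 - y ^ 2)) ^ 2 = ‖b‖ ^ 2 - y ^ 2 := by
      rw [mul_pow, hε, one_mul, Real.sq_sqrt (by linarith)]
    refine ⟨√(‖a‖ ^ 2 - x ^ 2), ε * √(‖b‖ ^ 2 - y ^ 2), by nlinarith, by nlinarith, ?_, ?_, ?_⟩
    · have hcross : ⟪a, b⟫ * √(‖a‖ ^ 2 - x ^ 2) * (ε * √(‖b‖ ^ 2 - y ^ 2))
          = |⟪a, b⟫| * √((‖a‖ ^ 2 - x ^ 2) * (‖b‖ ^ 2 - y ^ 2)) := by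
        rw [Real.sqrt_mul (by linarith), ← hεg]; ring
      rw [ellipseForm, gramDet, hs, ht]
      linarith
    · rw [hs, sub_sub_cancel, Real.sqrt_sq hx0]
    · rw [ht, sub_sub_cancel, Real.sqrt_sq hy0]
  · rintro ⟨s, t, hs, ht, hst, rfl, rfl⟩
    refine ⟨sqrt_sub_sq_mem_Icc (norm_nonneg a) s, sqrt_sub_sq_mem_Icc (norm_nonneg b) t, ?_⟩
    rw [Real.sq_sqrt (by linarith), Real.sq_sqrt (by linarith), sub_sub_cancel, sub_sub_cancel,
      ← mul_pow, Real.sqrt_sq_eq_abs]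
    have hcross : ⟪a, b⟫ * s * t ≤ |⟪a, b⟫| * |s * t| := by
      rw [mul_assoc, ← abs_mul]; exact le_abs_self _
    rw [ellipseForm, gramDet] at hst
    nlinarith

end InnerProductSpace

lemma E3.norm_sq_eq (a : E3) : ‖a‖ ^ 2 = a 0 ^ 2 + a 1 ^ 2 + a 2 ^ 2 := by
  rw [EuclideanSpace.norm_sq_eq, Fin.sum_univ_three]; simp [sq_abs]

lemma E3.inner_eq (a b : E3) : ⟪a, b⟫ = a 0 * b 0 + a 1 * b 1 + a 2 * b 2 := by
  simp [PiLp.inner_apply, Fin.sum_univ_three, mul_comm]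

lemma trace_qObs_mul_qObs (a0 b0 : ℝ) (a b : E3) :
    (qObs a0 a * qObs b0 b).trace = 2 * (a0 * b0 + ⟪a, b⟫ : ℝ) := by
  rw [E3.inner_eq]
  simp [qObs, pauli1, pauli2, pauli3, Matrix.trace_fin_two, Matrix.mul_apply, Fin.sum_univ_two]
  ring_nf
  rw [Complex.I_sq]
  ring

lemma qObs_mul_self (a0 : ℝ) (a : E3) :
    qObs a0 a * qObs a0 a = qObs (a0 ^ 2 + ‖a‖ ^ 2) ((2 * a0) • a) := by
  rw [E3.norm_sq_eq]
  ext i j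
  fin_cases i <;> fin_cases j <;>
    simp [qObs, pauli1, pauli2, pauli3, Matrix.mul_apply, Fin.sum_univ_two] <;>
    ring_nf <;> simp only [Complex.I_sq] <;> ring

lemma Matrix.IsHermitian.posSemidef_of_det_nonneg_of_trace_nonneg {𝕜 : Type*} [RCLike 𝕜]
    {A : Matrix (Fin 2) (Fin 2) 𝕜} (hA : A.IsHermitian) (hdet : 0 ≤ A.det)
    (htr : 0 ≤ A.trace) : A.PosSemidef := by
  rw [hA.det_eq_prod_eigenvalues, Fin.prod_univ_two, ← RCLike.ofReal_mul,
    RCLike.ofReal_nonneg] at hdet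
  rw [hA.trace_eq_sum_eigenvalues, Fin.sum_univ_two, ← RCLike.ofReal_add,
    RCLike.ofReal_nonneg] at htr
  rw [hA.posSemidef_iff_eigenvalues_nonneg, Pi.le_def, Fin.forall_fin_two]
  simp only [Pi.zero_apply]
  constructor <;> nlinarith

def blochState (r : E3) : Matrix (Fin 2) (Fin 2) ℂ := (1 / 2 : ℂ) • qObs 1 r

lemma isHermitian_blochState (r : E3) : (blochState r).IsHermitian := by
  ext i j
  fin_cases i <;> fin_cases j <;>
    simp [blochState, qObs, pauli1, pauli2, pauli3, Matrix.conjTranspose_apply, Complex.ext_iff] <;>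
    ring

lemma trace_blochState (r : E3) : (blochState r).trace = 1 := by
  simp [blochState, qObs, pauli1, pauli2, pauli3, Matrix.trace_fin_two]

lemma det_blochState (r : E3) : (blochState r).det = ((1 - ‖r‖ ^ 2) / 4 : ℝ) := by
  rw [E3.norm_sq_eq]
  simp [blochState, qObs, pauli1, pauli2, pauli3, Matrix.det_fin_two]
  ring_nf
  rw [Complex.I_sq]
  ring

lemma isDensityMatrix_blochState_iff (r : E3) : IsDensityMatrix (blochState r) ↔ ‖r‖ ≤ 1 := by
  have hdet : 0 ≤ (blochState r).det ↔ ‖r‖ ≤ 1 := by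
    rw [det_blochState, Complex.zero_le_real, ← sq_le_one_iff₀ (norm_nonneg r)]
    constructor <;> intro h <;> linarith
  refine ⟨fun h => hdet.mp h.1.det_nonneg, fun h => ⟨?_, trace_blochState r⟩⟩
  exact (isHermitian_blochState r).posSemidef_of_det_nonneg_of_trace_nonneg (hdet.mpr h)
    (by rw [trace_blochState]; exact zero_le_one)

lemma exists_eq_blochState_of_isHermitian {ρ : Matrix (Fin 2) (Fin 2) ℂ} (hρ : ρ.IsHermitian)
    (htr : ρ.trace = 1) : ∃ r : E3, ρ = blochState r := by
  have h00 : (ρ 0 0).im = 0 := Complex.conj_eq_iff_im.mp (hρ.apply 0 0)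
  have h11 : (ρ 1 1).im = 0 := Complex.conj_eq_iff_im.mp (hρ.apply 1 1)
  have h10 : ρ 1 0 = starRingEnd ℂ (ρ 0 1) := by simpa using (hρ.apply 1 0).symm
  have htr' : (ρ 0 0).re + (ρ 1 1).re = 1 := by
    simpa [Matrix.trace_fin_two] using congrArg Complex.re htr
  -- the Bloch vector `(Tr (ρ σᵢ))ᵢ`
  refine ⟨!₂[2 * (ρ 0 1).re, -2 * (ρ 0 1).im, (ρ 0 0).re - (ρ 1 1).re], ?_⟩
  ext i j
  fin_cases i <;> fin_cases j <;>
    simp [blochState, qObs, pauli1, pauli2, pauli3, Complex.ext_iff, h00, h11, h10] <;>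
    linarith

lemma exists_eq_blochState {ρ : Matrix (Fin 2) (Fin 2) ℂ} (hρ : IsDensityMatrix ρ) :
    ∃ r : E3, ‖r‖ ≤ 1 ∧ ρ = blochState r := by
  obtain ⟨r, rfl⟩ := exists_eq_blochState_of_isHermitian hρ.1.isHermitian hρ.2
  exact ⟨r, (isDensityMatrix_blochState_iff r).mp hρ, rfl⟩

lemma mean_qObs_blochState (a0 : ℝ) (a r : E3) : mean (qObs a0 a) (blochState r) = a0 + ⟪a, r⟫ := by
  rw [mean, blochState, Matrix.mul_smul, Matrix.trace_smul, trace_qObs_mul_qObs]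
  simp

lemma variance_qObs_blochState (a0 : ℝ) (a r : E3) :
    variance (qObs a0 a) (blochState r) = ‖a‖ ^ 2 - ⟪a, r⟫ ^ 2 := by
  change mean (qObs a0 a * qObs a0 a) (blochState r) - mean (qObs a0 a) (blochState r) ^ 2 = _
  rw [qObs_mul_self, mean_qObs_blochState, mean_qObs_blochState, real_inner_smul_left]
  ring

lemma uncertainty_qObs_blochState (a0 : ℝ) (a r : E3) :
    uncertainty (qObs a0 a) (blochState r) = √(‖a‖ ^ 2 - ⟪a, r⟫ ^ 2) := by
  rw [uncertainty, variance_qObs_blochState]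

/-- the uncertainty region of a pair of qubit observables with linearly
independent Bloch vectors. -/
theorem uncertainty_region_two_observables
    (a0 b0 : ℝ) (a b : E3) (hab : LinearIndependent ℝ ![a, b]) :
    {p : ℝ × ℝ | ∃ ρ : Matrix (Fin 2) (Fin 2) ℂ, IsDensityMatrix ρ ∧
        p = (uncertainty (qObs a0 a) ρ, uncertainty (qObs b0 b) ρ)} =
    {p : ℝ × ℝ | p.1 ∈ Set.Icc 0 ‖a‖ ∧ p.2 ∈ Set.Icc 0 ‖b‖ ∧
        ‖b‖ ^ 2 * p.1 ^ 2 + ‖a‖ ^ 2 * p.2 ^ 2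
            + 2 * |(inner ℝ a b : ℝ)| * Real.sqrt ((‖a‖ ^ 2 - p.1 ^ 2) * (‖b‖ ^ 2 - p.2 ^ 2))
          ≥ ‖a‖ ^ 2 * ‖b‖ ^ 2 + (inner ℝ a b : ℝ) ^ 2} := by
  ext ⟨x, y⟩
  simp only [mem_ofPred_eq, Prod.mk.injEq]
  rw [mem_region_iff_exists_ellipseForm_le]
  constructor
  · rintro ⟨ρ, hρ, rfl, rfl⟩
    obtain ⟨r, hr, rfl⟩ := exists_eq_blochState hρ
    have hellipse : ellipseForm a b ⟪a, r⟫ ⟪b, r⟫ ≤ gramDet a b :=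
      (ellipseForm_inner_le r).trans
        (mul_le_of_le_one_right (gramDet_nonneg a b) (pow_le_one₀ (norm_nonneg r) hr))
    exact ⟨⟪a, r⟫, ⟪b, r⟫, inner_sq_le_norm_sq_of_norm_le_one a hr,
      inner_sq_le_norm_sq_of_norm_le_one b hr, hellipse,
      uncertainty_qObs_blochState a0 a r, uncertainty_qObs_blochState b0 b r⟩
  · rintro ⟨s, t, -, -, hst, rfl, rfl⟩
    obtain ⟨r, hr, rfl, rfl⟩ :=
      exists_inner_eq_of_ellipseForm_le (gramDet_pos_of_linearIndependent a b hab) hst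
    exact ⟨blochState r, (isDensityMatrix_blochState_iff r).mpr hr,
      (uncertainty_qObs_blochState a0 a r).symm, (uncertainty_qObs_blochState b0 b r).symm⟩

end
end

section
/- For i = 1,2,3 let A_i, B_i, C_i be qubit observables with Bloch vectors a_i, b_i, c_i ∈ ℝ³, and assume each of the triples {a₁,a₂,a₃}, {b₁,b₂,b₃}, {c₁,c₂,c₃} is linearly independent. Define the 8×8 Hermitian matrices M_i = A_i ⊗ I ⊗ I + I ⊗ B_i ⊗ I + I ⊗ I ⊗ C_i (Kronecker products, I the 2×2 identity). If ρ is a fully separable tripartite density matrix, i.e. ρ = Σ_k p_k · ρ_{k,A} ⊗ ρ_{k,B} ⊗ ρ_{k,C} is a finite convex combination (p_k ≥ 0, Σ_k p_k = 1) of Kronecker products of qubit density matrices, then Σ_{i=1}^{3} (Δ_ρM_i)² ≥ (Tr(T_{a₁,a₂,a₃}) − λ_max(T_{a₁,a₂,a₃})) + (Tr(T_{b₁,b₂,b₃}) − λ_max(T_{b₁,b₂,b₃})) + (Tr(T_{c₁,c₂,c₃}) − λ_max(T_{c₁,c₂,c₃})). -/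
open Matrix MeasureTheory Filter Set
open scoped RealInnerProductSpace Kronecker ComplexOrder

noncomputable section

/-- The tripartite observable A ⊗ I ⊗ I + I ⊗ B ⊗ I + I ⊗ I ⊗ C. -/
def obs3 (A B C : Matrix (Fin 2) (Fin 2) ℂ) :
    Matrix ((Fin 2 × Fin 2) × Fin 2) ((Fin 2 × Fin 2) × Fin 2) ℂ :=
  A ⊗ₖ (1 : Matrix (Fin 2) (Fin 2) ℂ) ⊗ₖ (1 : Matrix (Fin 2) (Fin 2) ℂ)
    + (1 : Matrix (Fin 2) (Fin 2) ℂ) ⊗ₖ B ⊗ₖ (1 : Matrix (Fin 2) (Fin 2) ℂ)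
    + (1 : Matrix (Fin 2) (Fin 2) ℂ) ⊗ₖ (1 : Matrix (Fin 2) (Fin 2) ℂ) ⊗ₖ C


/-!
Variance is concave in the state, so it suffices to bound `∑ᵢ (Δ Mᵢ)²` on product states
`ρ_A ⊗ ρ_B ⊗ ρ_C`, where the variance of a sum of local observables splits into the three local
variances. For a qubit state with Bloch vector `r`, `‖r‖ ≤ 1`, one has
`(Δ (a₀ + a·σ))² = ‖a‖² - ⟪a, r⟫²`, and `∑ᵢ ⟪aᵢ, r⟫² ≤ λ_max(T_a) ‖r‖² ≤ λ_max(T_a)`, while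
`∑ᵢ ‖aᵢ‖² = Tr T_a`.
-/

namespace Matrix

lemma IsHermitian.dotProduct_mulVec_le_iSup_eigenvalues_mul {n : Type*} [Fintype n]
    [DecidableEq n] {A : Matrix n n ℝ} (hA : A.IsHermitian) (x : n → ℝ) :
    x ⬝ᵥ (A *ᵥ x) ≤ (⨆ i, hA.eigenvalues i) * (x ⬝ᵥ x) := by
  set b := hA.eigenvectorBasis
  set y : EuclideanSpace ℝ n := WithLp.toLp 2 x
  have hAb : ∀ i, ⟪b i, WithLp.toLp 2 (A *ᵥ x)⟫ = hA.eigenvalues i * ⟪b i, y⟫ := by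
    intro i
    have h := (isSymmetric_toEuclideanLin_iff.mpr hA) (b i) y
    simp only [toLpLin_apply] at h
    rw [← h, hA.mulVec_eigenvectorBasis, WithLp.toLp_smul, WithLp.toLp_ofLp,
      real_inner_smul_left]
  have hdot : ∀ z : n → ℝ, x ⬝ᵥ z = ⟪y, WithLp.toLp 2 z⟫ := by
    intro z
    simp [EuclideanSpace.inner_eq_star_dotProduct, y, dotProduct_comm]
  have hbdd : BddAbove (Set.range hA.eigenvalues) := (Set.finite_range _).bddAbove
  calc x ⬝ᵥ (A *ᵥ x) = ∑ i, hA.eigenvalues i * ⟪b i, y⟫ ^ 2 := by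
        rw [hdot, ← b.sum_inner_mul_inner]
        refine Finset.sum_congr rfl fun i _ => ?_
        rw [hAb, real_inner_comm]
        ring
    _ ≤ ∑ i, (⨆ j, hA.eigenvalues j) * ⟪b i, y⟫ ^ 2 := by
        gcongr with i
        exact le_ciSup hbdd i
    _ = (⨆ i, hA.eigenvalues i) * (x ⬝ᵥ x) := by
        rw [← Finset.mul_sum, hdot, ← b.sum_inner_mul_inner]
        refine congrArg _ (Finset.sum_congr rfl fun i _ => ?_)
        rw [sq, real_inner_comm y]

lemma IsHermitian.kronecker {m n R : Type*} [CommSemiring R] [StarRing R] {A : Matrix m m R}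
    {B : Matrix n n R} (hA : A.IsHermitian) (hB : B.IsHermitian) : (A ⊗ₖ B).IsHermitian := by
  rw [IsHermitian, conjTranspose_kronecker, hA, hB]

lemma IsHermitian.im_trace_mul_eq_zero {n : Type*} [Fintype n] {A B : Matrix n n ℂ}
    (hA : A.IsHermitian) (hB : B.IsHermitian) : (trace (A * B)).im = 0 := by
  rw [← Complex.conj_eq_iff_im]
  change star (trace (A * B)) = _
  rw [← trace_conjTranspose, conjTranspose_mul, hA, hB, trace_mul_comm]

end Matrix

section Mixture

variable {n ι : Type*} [Fintype n] [Fintype ι] {p : ι → ℝ} (σ : ι → Matrix n n ℂ)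

lemma variance_eq_mean_sub (M ρ : Matrix n n ℂ) :
    variance M ρ = mean (M * M) ρ - mean M ρ ^ 2 := rfl

lemma mean_sum_smul (M : Matrix n n ℂ) :
    mean M (∑ k, (p k : ℂ) • σ k) = ∑ k, p k * mean M (σ k) := by
  simp [mean, Finset.mul_sum, trace_sum, Complex.re_sum]

lemma sum_mul_variance_le_variance_sum_smul (hp : ∀ k, 0 ≤ p k) (hpsum : ∑ k, p k = 1)
    (M : Matrix n n ℂ) :
    ∑ k, p k * variance M (σ k) ≤ variance M (∑ k, (p k : ℂ) • σ k) := by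
  have hJensen : (∑ k, p k * mean M (σ k)) ^ 2 ≤ ∑ k, p k * mean M (σ k) ^ 2 := by
    simpa only [smul_eq_mul] using (even_two.convexOn_pow (𝕜 := ℝ)).map_sum_le
      (t := Finset.univ) (p := fun k => mean M (σ k)) (fun k _ => hp k) hpsum
      (fun _ _ => Set.mem_univ _)
  simp only [variance_eq_mean_sub, mean_sum_smul, mul_sub, Finset.sum_sub_distrib]
  linarith

lemma le_sum_variance_sum_smul {κ : Type*} [Fintype κ] (hp : ∀ k, 0 ≤ p k)
    (hpsum : ∑ k, p k = 1) (M : κ → Matrix n n ℂ) {c : ℝ}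
    (hc : ∀ k, c ≤ ∑ i, variance (M i) (σ k)) :
    c ≤ ∑ i, variance (M i) (∑ k, (p k : ℂ) • σ k) :=
  calc c = ∑ k, p k * c := by rw [← Finset.sum_mul, hpsum, one_mul]
    _ ≤ ∑ k, p k * ∑ i, variance (M i) (σ k) :=
        Finset.sum_le_sum fun k _ => mul_le_mul_of_nonneg_left (hc k) (hp k)
    _ = ∑ i, ∑ k, p k * variance (M i) (σ k) := by
        simp only [Finset.mul_sum]
        exact Finset.sum_comm
    _ ≤ ∑ i, variance (M i) (∑ k, (p k : ℂ) • σ k) :=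
        Finset.sum_le_sum fun i _ => sum_mul_variance_le_variance_sum_smul σ hp hpsum (M i)

end Mixture

section ProductStates

variable {m n : Type*} [Fintype m] [Fintype n]

lemma IsDensityMatrix.kronecker {ρ : Matrix m m ℂ} {σ : Matrix n n ℂ} (hρ : IsDensityMatrix ρ)
    (hσ : IsDensityMatrix σ) : IsDensityMatrix (ρ ⊗ₖ σ) :=
  ⟨hρ.1.kronecker hσ.1, by rw [trace_kronecker, hρ.2, hσ.2, one_mul]⟩

lemma variance_kronecker_add [DecidableEq m] [DecidableEq n] {A ρ : Matrix m m ℂ}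
    {B σ : Matrix n n ℂ} (hA : A.IsHermitian) (hB : B.IsHermitian) (hρ : IsDensityMatrix ρ)
    (hσ : IsDensityMatrix σ) :
    variance (A ⊗ₖ 1 + 1 ⊗ₖ B) (ρ ⊗ₖ σ) = variance A ρ + variance B σ := by
  have hAρ := hA.im_trace_mul_eq_zero hρ.1.isHermitian
  have hBσ := hB.im_trace_mul_eq_zero hσ.1.isHermitian
  have hmean : trace ((A ⊗ₖ 1 + 1 ⊗ₖ B) * (ρ ⊗ₖ σ)) = trace (A * ρ) + trace (B * σ) := by
    simp only [add_mul, ← mul_kronecker_mul, trace_add, trace_kronecker, one_mul, hρ.2, hσ.2,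
      mul_one]
  have hsecond : trace ((A ⊗ₖ 1 + 1 ⊗ₖ B) * (A ⊗ₖ 1 + 1 ⊗ₖ B) * (ρ ⊗ₖ σ))
      = trace (A * A * ρ) + 2 * (trace (A * ρ) * trace (B * σ)) + trace (B * B * σ) := by
    simp only [add_mul, mul_add, ← mul_kronecker_mul, trace_add, trace_kronecker, one_mul,
      mul_one, hρ.2, hσ.2]
    ring
  simp only [variance, mean, hmean, hsecond, Complex.add_re, Complex.mul_re, hAρ, hBσ,
    Complex.re_ofNat, Complex.im_ofNat]
  ring

end ProductStates

lemma obs3_eq_kronecker_add (A B C : Matrix (Fin 2) (Fin 2) ℂ) :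
    obs3 A B C = (A ⊗ₖ 1 + 1 ⊗ₖ B) ⊗ₖ 1 + 1 ⊗ₖ C := by
  rw [obs3, add_kronecker, one_kronecker_one]

lemma variance_obs3_kronecker {A B C ρ₁ ρ₂ ρ₃ : Matrix (Fin 2) (Fin 2) ℂ}
    (hA : A.IsHermitian) (hB : B.IsHermitian) (hC : C.IsHermitian)
    (hρ₁ : IsDensityMatrix ρ₁) (hρ₂ : IsDensityMatrix ρ₂) (hρ₃ : IsDensityMatrix ρ₃) :
    variance (obs3 A B C) (ρ₁ ⊗ₖ ρ₂ ⊗ₖ ρ₃) = variance A ρ₁ + variance B ρ₂ + variance C ρ₃ := by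
  have hAB := (hA.kronecker isHermitian_one).add (isHermitian_one.kronecker hB)
  rw [obs3_eq_kronecker_add, variance_kronecker_add hAB hC (hρ₁.kronecker hρ₂) hρ₃,
    variance_kronecker_add hA hB hρ₁ hρ₂]

def blochVector (ρ : Matrix (Fin 2) (Fin 2) ℂ) : E3 :=
  !₂[mean pauli1 ρ, mean pauli2 ρ, mean pauli3 ρ]

lemma qObs_isHermitian (a0 : ℝ) (a : E3) : (qObs a0 a).IsHermitian := by
  ext i j
  fin_cases i <;> fin_cases j <;> simp [qObs, pauli1, pauli2, pauli3, conjTranspose_apply]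

lemma mean_qObs (a0 : ℝ) (a : E3) {ρ : Matrix (Fin 2) (Fin 2) ℂ} (hρ : ρ.trace = 1) :
    mean (qObs a0 a) ρ = a0 + ⟪a, blochVector ρ⟫ := by
  simp only [mean, qObs, add_mul, Algebra.smul_mul_assoc, one_mul, trace_add, trace_smul, hρ,
    Complex.real_smul, mul_one, Complex.add_re, Complex.ofReal_re, Complex.mul_re,
    Complex.ofReal_im, zero_mul, sub_zero, blochVector, PiLp.inner_apply, RCLike.inner_apply,
    Real.ringHom_apply, Fin.sum_univ_three, cons_val_zero, cons_val_one, cons_val,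
    Complex.coe_smul]
  ring

lemma variance_qObs (a0 : ℝ) (a : E3) {ρ : Matrix (Fin 2) (Fin 2) ℂ} (hρ : ρ.trace = 1) :
    variance (qObs a0 a) ρ = ‖a‖ ^ 2 - ⟪a, blochVector ρ⟫ ^ 2 := by
  rw [variance_eq_mean_sub, qObs_mul_self, mean_qObs _ _ hρ, mean_qObs _ _ hρ, inner_smul_left,
    conj_trivial]
  ring

lemma norm_blochVector_le_one {ρ : Matrix (Fin 2) (Fin 2) ℂ} (hρ : IsDensityMatrix ρ) :
    ‖blochVector ρ‖ ≤ 1 := by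
  obtain ⟨hpos, htr⟩ := hρ
  have h10 : ρ 1 0 = star (ρ 0 1) := by rw [← hpos.isHermitian.apply 1 0]
  have h00 : (ρ 0 0).im = 0 := by
    simpa using congrArg Complex.im (hpos.isHermitian.coe_re_apply_self 0).symm
  have h11 : (ρ 1 1).im = 0 := by
    simpa using congrArg Complex.im (hpos.isHermitian.coe_re_apply_self 1).symm
  have hnorm : ‖blochVector ρ‖ ^ 2
      = (2 * (ρ 0 1).re) ^ 2 + (2 * (ρ 0 1).im) ^ 2 + ((ρ 0 0).re - (ρ 1 1).re) ^ 2 := by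
    rw [EuclideanSpace.norm_sq_eq]
    simp only [blochVector, mean, pauli1, pauli2, pauli3, cons_mul, Matrix.empty_mul,
      Equiv.symm_apply_apply, trace_fin_two, of_apply, cons_val', vecMul, dotProduct,
      Fin.sum_univ_two, Fin.sum_univ_three, cons_val_zero, cons_val_one, cons_val_fin_one,
      cons_val, h10, RCLike.star_def, zero_mul, one_mul, neg_mul, mul_neg, zero_add, add_zero,
      zero_sub, sub_neg_eq_add, Complex.add_re, Complex.neg_re, Complex.mul_re, Complex.conj_re,
      Complex.conj_im, Complex.I_re, Complex.I_im, Real.norm_eq_abs, sq_abs]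
    ring
  have hdet : 0 ≤ (ρ 0 0).re * (ρ 1 1).re - ((ρ 0 1).re ^ 2 + (ρ 0 1).im ^ 2) := by
    have h := (Complex.le_def.mp hpos.det_nonneg).1
    simp only [Complex.zero_re, det_fin_two, h10, RCLike.star_def, Complex.sub_re,
      Complex.mul_re, h00, h11, mul_zero, sub_zero, Complex.conj_re, Complex.conj_im, mul_neg,
      sub_neg_eq_add] at h
    nlinarith
  have htr' : (ρ 0 0).re + (ρ 1 1).re = 1 := by
    simpa [trace_fin_two] using congrArg Complex.re htr
  -- `‖r‖² = (Tr ρ)² - 4 det ρ` for the Bloch vector `r` of a Hermitian `2 × 2` matrix `ρ`.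
  rw [← pow_le_one_iff_of_nonneg (norm_nonneg _) two_ne_zero, hnorm]
  nlinarith

lemma lamMax_nonneg {m : ℕ} (v : Fin m → E3) : 0 ≤ lamMax v :=
  Real.iSup_nonneg (posSemidef_gram ℝ v).eigenvalues_nonneg

lemma trace_gram {m : ℕ} (v : Fin m → E3) : (gram v).trace = ∑ i, ‖v i‖ ^ 2 := by
  simp [trace, _root_.gram]

lemma sum_inner_sq_le_lamMax_mul {m : ℕ} (v : Fin m → E3) (n : E3) :
    ∑ i, ⟪v i, n⟫ ^ 2 ≤ lamMax v * ‖n‖ ^ 2 := by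
  -- Cauchy–Schwarz: `‖x‖⁴ = ⟪w, n⟫² ≤ ‖w‖² ‖n‖² = (xᵀ T x) ‖n‖² ≤ λ_max ‖x‖² ‖n‖²`.
  set x : Fin m → ℝ := fun i => ⟪v i, n⟫
  set w : E3 := ∑ i, x i • v i
  have hS : ∑ i, ⟪v i, n⟫ ^ 2 = x ⬝ᵥ x := by simp [x, dotProduct, sq]
  have hwn : ⟪w, n⟫ = x ⬝ᵥ x := by
    simp [w, sum_inner, real_inner_smul_left, dotProduct, x]
  have hww : ⟪w, w⟫ ≤ lamMax v * (x ⬝ᵥ x) := by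
    have hgram : x ⬝ᵥ (gram v *ᵥ x) = ⟪w, w⟫ := star_dotProduct_gram_mulVec v x x
    rw [← hgram]
    exact (gram_isHermitian v).dotProduct_mulVec_le_iSup_eigenvalues_mul x
  have hcs := real_inner_mul_inner_self_le w n
  rw [hwn, real_inner_self_eq_norm_sq n] at hcs
  have hxx : 0 ≤ x ⬝ᵥ x := Finset.sum_nonneg fun i _ => mul_self_nonneg _
  rw [hS]
  nlinarith [mul_le_mul_of_nonneg_right hww (sq_nonneg ‖n‖),
    mul_nonneg (lamMax_nonneg v) (sq_nonneg ‖n‖)]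

lemma trace_gram_sub_lamMax_le_sum_variance_qObs {m : ℕ} (v0 : Fin m → ℝ) (v : Fin m → E3)
    {ρ : Matrix (Fin 2) (Fin 2) ℂ} (hρ : IsDensityMatrix ρ) :
    (gram v).trace - lamMax v ≤ ∑ i, variance (qObs (v0 i) (v i)) ρ := by
  have hproj := sum_inner_sq_le_lamMax_mul v (blochVector ρ)
  have hscale : lamMax v * ‖blochVector ρ‖ ^ 2 ≤ lamMax v :=
    mul_le_of_le_one_right (lamMax_nonneg v)
      (pow_le_one₀ (norm_nonneg _) (norm_blochVector_le_one hρ))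
  simp only [variance_qObs _ _ hρ.2, Finset.sum_sub_distrib, trace_gram]
  linarith

theorem fully_separable_three_measurements_general
    (a0 b0 c0 : Fin 3 → ℝ) (a b c : Fin 3 → E3)
    (ρ : Matrix ((Fin 2 × Fin 2) × Fin 2) ((Fin 2 × Fin 2) × Fin 2) ℂ)
    (N : ℕ) (p : Fin N → ℝ)
    (ρA ρB ρC : Fin N → Matrix (Fin 2) (Fin 2) ℂ)
    (hp : ∀ k, 0 ≤ p k) (hpsum : ∑ k, p k = 1)
    (hA : ∀ k, IsDensityMatrix (ρA k)) (hB : ∀ k, IsDensityMatrix (ρB k))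
    (hC : ∀ k, IsDensityMatrix (ρC k))
    (hsep : ρ = ∑ k, (p k : ℂ) • (ρA k ⊗ₖ ρB k ⊗ₖ ρC k)) :
    ∑ i : Fin 3, variance (obs3 (qObs (a0 i) (a i)) (qObs (b0 i) (b i)) (qObs (c0 i) (c i))) ρ
      ≥ ((gram a).trace - lamMax a) + ((gram b).trace - lamMax b)
        + ((gram c).trace - lamMax c) := by
  subst hsep
  refine le_sum_variance_sum_smul _ hp hpsum _ fun k => ?_
  simp only [variance_obs3_kronecker (qObs_isHermitian _ _) (qObs_isHermitian _ _)
    (qObs_isHermitian _ _) (hA k) (hB k) (hC k), Finset.sum_add_distrib]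
  linarith [trace_gram_sub_lamMax_le_sum_variance_qObs a0 a (hA k),
    trace_gram_sub_lamMax_le_sum_variance_qObs b0 b (hB k),
    trace_gram_sub_lamMax_le_sum_variance_qObs c0 c (hC k)]

/-- entanglement criterion for fully separable tripartite states with three
composite measurements. -/
theorem fully_separable_three_measurements
    (a0 b0 c0 : Fin 3 → ℝ) (a b c : Fin 3 → E3)
    (hlia : LinearIndependent ℝ ![a 0, a 1, a 2])
    (hlib : LinearIndependent ℝ ![b 0, b 1, b 2])
    (hlic : LinearIndependent ℝ ![c 0, c 1, c 2])
    (ρ : Matrix ((Fin 2 × Fin 2) × Fin 2) ((Fin 2 × Fin 2) × Fin 2) ℂ)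
    (N : ℕ) (p : Fin N → ℝ)
    (ρA ρB ρC : Fin N → Matrix (Fin 2) (Fin 2) ℂ)
    (hp : ∀ k, 0 ≤ p k) (hpsum : ∑ k, p k = 1)
    (hA : ∀ k, IsDensityMatrix (ρA k)) (hB : ∀ k, IsDensityMatrix (ρB k))
    (hC : ∀ k, IsDensityMatrix (ρC k))
    (hsep : ρ = ∑ k, (p k : ℂ) • (ρA k ⊗ₖ ρB k ⊗ₖ ρC k)) :
    ∑ i : Fin 3, variance (obs3 (qObs (a0 i) (a i)) (qObs (b0 i) (b i)) (qObs (c0 i) (c i))) ρ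
      ≥ ((gram a).trace - lamMax a) + ((gram b).trace - lamMax b)
        + ((gram c).trace - lamMax c) :=
  fully_separable_three_measurements_general a0 b0 c0 a b c ρ N p ρA ρB ρC hp hpsum hA hB hC hsep

end
end
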